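/- arXiv:1702.06611 — 3 statements merged into one kernel-verified Lean document; each statement's English description precedes it below -/
import Mathlib

section
/- Let A be a commutative ring, B an A[t]-algebra, B_1 an A-algebra, and θ: B ⊗_{A[t]} A[t,t^{-1}] ≅ B_1 ⊗_A A[t,t^{-1}] an isomorphism of A[t,t^{-1}]-algebras. Suppose B has a generating set {b_α} with θ(b_α) = c_α ⊗ t^{n_α} for some c_α ∈ B_1 and n_α ∈ Z. Then the automorphism β of B_1 ⊗_A A[t,t^{-1},s,s^{-1}] determined by b_1 ↦ b_1, t ↦ st, s ↦ s restricts to an automorphism of the subalgebra θ(B) ⊗_{A[t]} A[t,s,s^{-1}]. -/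
/-!
STATEMENT 4: Let `A` be a commutative ring, `B` an `A[t]`-algebra, `B₁` an `A`-algebra,
and `θ : B ⊗_{A[t]} A[t,t⁻¹] ≅ B₁ ⊗_A A[t,t⁻¹]` an isomorphism (compatible with the
`A[t,t⁻¹]`-structures). Suppose `B` has a generating set `{b_α}` with
`θ(b_α) = c_α ⊗ t^{n_α}`. Then the automorphism `β` of `B₁ ⊗_A A[t,t⁻¹,s,s⁻¹]` determined
by `b₁ ↦ b₁`, `t ↦ st`, `s ↦ s` restricts to an automorphism of the subalgebra
`θ(B) ⊗_{A[t]} A[t,s,s⁻¹]`.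

We model `A[t,t⁻¹,s,s⁻¹]` as the group algebra `A[ℤ × ℤ]` (first coordinate: powers of
`t`, second: powers of `s`), and `β` as induced by the shearing `(a,b) ↦ (a, a+b)`.
-/

open Polynomial LaurentPolynomial TensorProduct

/-- The shearing `t^a s^b ↦ t^a s^{a+b}` (i.e. `t ↦ st`, `s ↦ s`). -/
def shear : ℤ × ℤ ≃+ ℤ × ℤ where
  toFun p := (p.1, p.1 + p.2)
  invFun p := (p.1, p.2 - p.1)
  left_inv p := by simp
  right_inv p := by simp
  map_add' p q := by
    simp only [Prod.fst_add, Prod.snd_add, Prod.mk_add_mk, Prod.mk.injEq]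
    exact ⟨trivial, by ring⟩

/-! `β` and `β⁻¹` fix the `t`-degree of every monomial, so they permute the generators
`1 ⊗ tᵃ sᵇ` (`a ≥ 0`) of the subalgebra. The `b ∈ B` for which they send `θ(b)` into the subalgebra
form an `A`-subalgebra of `B`, so it suffices to treat `t`, which goes to `1 ⊗ t s^{±1}`, and the
generators `b_α`, which go to `c_α ⊗ t^{n_α} s^{±n_α} = θ(b_α) · (1 ⊗ s^{±n_α})`. -/

theorem AlgHom.apply_mem_of_adjoin_eq_top {R S B M : Type*} [CommSemiring R] [CommSemiring S]
    [Algebra R S] [Semiring B] [Algebra R B] [Algebra S B] [IsScalarTower R S B] [Semiring M]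
    [Algebra R M] (f : B →ₐ[R] M) {C : Subalgebra R M} {s : Set B}
    (hs : Algebra.adjoin S s = ⊤) (halgebraMap : ∀ r : S, f (algebraMap S B r) ∈ C)
    (hgen : ∀ x ∈ s, f x ∈ C) (b : B) : f b ∈ C := by
  induction (hs ▸ Algebra.mem_top : b ∈ Algebra.adjoin S s) using Algebra.adjoin_induction with
  | mem x hx => exact hgen x hx
  | algebraMap r => exact halgebraMap r
  | add x y _ _ hx hy => simpa only [map_add] using C.add_mem hx hy
  | mul x y _ _ hx hy => simpa only [map_mul] using C.mul_mem hx hy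

theorem Polynomial.algHom_apply_mem_of_X_mem {R M : Type*} [CommSemiring R] [Semiring M]
    [Algebra R M] (g : R[X] →ₐ[R] M) {C : Subalgebra R M} (hX : g X ∈ C) (p : R[X]) :
    g p ∈ C := by
  rw [← aeval_X_left_apply p, ← aeval_algHom_apply]
  exact Algebra.adjoin_le (Set.singleton_subset_iff.2 hX) (aeval_mem_adjoin_singleton R (g X))

theorem Subalgebra.map_eq_self_of_map_le {R M : Type*} [CommSemiring R] [Semiring M] [Algebra R M]
    (e : M ≃ₐ[R] M) {C : Subalgebra R M} (he : C.map e.toAlgHom ≤ C)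
    (hsymm : C.map e.symm.toAlgHom ≤ C) : C.map e.toAlgHom = C :=
  le_antisymm he fun x hx => ⟨e.symm x, hsymm ⟨x, hx, rfl⟩, e.apply_symm_apply x⟩

section Monomials

variable {A B₁ : Type*} [CommSemiring A] [Semiring B₁] [Algebra A B₁]

theorem Algebra.TensorProduct.congr_refl_domCongr_tmul_single {G H : Type*} [AddMonoid G]
    [AddMonoid H] (σ : G ≃+ H) (c : B₁) (g : G) (a : A) :
    congr (AlgEquiv.refl (R := A) (A₁ := B₁)) (AddMonoidAlgebra.domCongr A A σ)
      (c ⊗ₜ AddMonoidAlgebra.single g a) =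
      c ⊗ₜ AddMonoidAlgebra.single (σ g) a := by
  simp [congr_apply]

theorem Algebra.TensorProduct.tmul_single_add {G : Type*} [AddMonoid G] (c : B₁) (g h : G) :
    c ⊗ₜ[A] AddMonoidAlgebra.single (g + h) (1 : A) =
      (c ⊗ₜ AddMonoidAlgebra.single g 1) * ((1 : B₁) ⊗ₜ AddMonoidAlgebra.single h 1) := by
  rw [tmul_mul_tmul, mul_one, AddMonoidAlgebra.single_mul_single, mul_one]

end Monomials

section IntegralStructure

variable {A B B₁ : Type*} [CommRing A] [CommRing B] [Algebra A[X] B] [Algebra A B]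
  [IsScalarTower A A[X] B] [CommRing B₁] [Algebra A B₁]

variable (A B₁) in
noncomputable def includeLaurentInl :
    B₁ ⊗[A] A[T;T⁻¹] →ₐ[A] B₁ ⊗[A] AddMonoidAlgebra A (ℤ × ℤ) :=
  Algebra.TensorProduct.map (AlgHom.id A B₁)
    (AddMonoidAlgebra.mapDomainAlgHom A A (AddMonoidHom.inl ℤ ℤ))

theorem includeLaurentInl_tmul_T (c : B₁) (n : ℤ) :
    includeLaurentInl A B₁ (c ⊗ₜ T n) = c ⊗ₜ AddMonoidAlgebra.single (n, 0) 1 := by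
  simp only [includeLaurentInl, Algebra.TensorProduct.map_tmul, AlgHom.coe_id, id_eq,
    AddMonoidAlgebra.mapDomainAlgHom_apply, T, AddMonoidAlgebra.mapDomain_single,
    AddMonoidHom.inl_apply]

noncomputable def integralSubalgebra
    (θ : (B ⊗[A[X]] A[T;T⁻¹]) ≃ₐ[A] (B₁ ⊗[A] A[T;T⁻¹])) :
    Subalgebra A (B₁ ⊗[A] AddMonoidAlgebra A (ℤ × ℤ)) :=
  Algebra.adjoin A
    ((Set.range fun b : B => includeLaurentInl A B₁ (θ (b ⊗ₜ[A[X]] 1))) ∪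
      {z | ∃ (a b : ℤ), 0 ≤ a ∧
        z = (1 : B₁) ⊗ₜ[A] AddMonoidAlgebra.single ((a, b) : ℤ × ℤ) (1 : A)})

variable (θ : (B ⊗[A[X]] A[T;T⁻¹]) ≃ₐ[A] (B₁ ⊗[A] A[T;T⁻¹]))

theorem includeLaurentInl_mem_integralSubalgebra (b : B) :
    includeLaurentInl A B₁ (θ (b ⊗ₜ[A[X]] 1)) ∈ integralSubalgebra θ :=
  Algebra.subset_adjoin (Or.inl ⟨b, rfl⟩)

theorem one_tmul_single_mem_integralSubalgebra {p : ℤ × ℤ} (hp : 0 ≤ p.1) :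
    (1 : B₁) ⊗ₜ AddMonoidAlgebra.single p (1 : A) ∈ integralSubalgebra θ :=
  Algebra.subset_adjoin (Or.inr ⟨p.1, p.2, hp, rfl⟩)

variable {σ : ℤ × ℤ ≃+ ℤ × ℤ} (hσ : ∀ p, (σ p).1 = p.1)
include hσ

theorem congr_domCongr_includeLaurentInl_one_tmul_toLaurent_mem (p : A[X]) :
    Algebra.TensorProduct.congr (AlgEquiv.refl (R := A) (A₁ := B₁))
      (AddMonoidAlgebra.domCongr A A σ) (includeLaurentInl A B₁ (1 ⊗ₜ toLaurent p)) ∈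
        integralSubalgebra θ := by
  refine Polynomial.algHom_apply_mem_of_X_mem
    ((Algebra.TensorProduct.congr AlgEquiv.refl (AddMonoidAlgebra.domCongr A A σ)).toAlgHom.comp
      ((includeLaurentInl A B₁).comp (Algebra.TensorProduct.includeRight.comp toLaurentAlg))) ?_ p
  change Algebra.TensorProduct.congr _ _ (includeLaurentInl A B₁ (1 ⊗ₜ toLaurent X)) ∈ _
  rw [toLaurent_X, includeLaurentInl_tmul_T,
    Algebra.TensorProduct.congr_refl_domCongr_tmul_single]
  exact one_tmul_single_mem_integralSubalgebra θ (by rw [hσ]; exact zero_le_one)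

variable {θ} (hθT : ∀ l : A[T;T⁻¹], θ ((1 : B) ⊗ₜ[A[X]] l) = (1 : B₁) ⊗ₜ[A] l)
  {Sgen : Set B} (hgen : Algebra.adjoin A[X] Sgen = ⊤)
  (hmono : ∀ b ∈ Sgen, ∃ (c : B₁) (n : ℤ), θ (b ⊗ₜ[A[X]] 1) = c ⊗ₜ[A] (T n))
include hθT hgen hmono

theorem congr_domCongr_includeLaurentInl_mem_integralSubalgebra (b : B) :
    Algebra.TensorProduct.congr (AlgEquiv.refl (R := A) (A₁ := B₁))
      (AddMonoidAlgebra.domCongr A A σ) (includeLaurentInl A B₁ (θ (b ⊗ₜ[A[X]] 1))) ∈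
        integralSubalgebra θ := by
  set e := Algebra.TensorProduct.congr (AlgEquiv.refl (R := A) (A₁ := B₁))
    (AddMonoidAlgebra.domCongr A A σ)
  refine (e.toAlgHom.comp ((includeLaurentInl A B₁).comp
    (θ.toAlgHom.comp Algebra.TensorProduct.includeLeft))).apply_mem_of_adjoin_eq_top hgen ?_ ?_ b
  · intro p
    change e (includeLaurentInl A B₁ (θ (algebraMap A[X] B p ⊗ₜ[A[X]] 1))) ∈ _
    rw [Algebra.TensorProduct.tmul_one_eq_one_tmul, hθT]
    exact congr_domCongr_includeLaurentInl_one_tmul_toLaurent_mem θ hσ p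
  · intro x hx
    obtain ⟨c, n, hcn⟩ := hmono x hx
    have hxC := includeLaurentInl_mem_integralSubalgebra θ x
    change e (includeLaurentInl A B₁ (θ (x ⊗ₜ[A[X]] 1))) ∈ _
    rw [hcn, includeLaurentInl_tmul_T] at hxC ⊢
    have hσn : σ (n, 0) = (n, 0) + (0, (σ (n, 0)).2) := Prod.ext (by simp [hσ]) (by simp)
    rw [Algebra.TensorProduct.congr_refl_domCongr_tmul_single, hσn,
      Algebra.TensorProduct.tmul_single_add]
    exact mul_mem hxC (one_tmul_single_mem_integralSubalgebra θ le_rfl)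

theorem map_congr_domCongr_integralSubalgebra_le :
    (integralSubalgebra θ).map (Algebra.TensorProduct.congr (AlgEquiv.refl (R := A) (A₁ := B₁))
      (AddMonoidAlgebra.domCongr A A σ)).toAlgHom ≤ integralSubalgebra θ := by
  rw [integralSubalgebra, AlgHom.map_adjoin, Algebra.adjoin_le_iff]
  rintro _ ⟨z, ⟨b, rfl⟩ | ⟨a, b, ha, rfl⟩, rfl⟩
  · exact congr_domCongr_includeLaurentInl_mem_integralSubalgebra hσ hθT hgen hmono b
  · change Algebra.TensorProduct.congr _ _ _ ∈ _
    rw [Algebra.TensorProduct.congr_refl_domCongr_tmul_single]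
    exact one_tmul_single_mem_integralSubalgebra θ (by rwa [hσ])

end IntegralStructure

theorem beta_preserves_integral_structure
    (A : Type*) [CommRing A]
    (B : Type*) [CommRing B] [Algebra A[X] B] [Algebra A B] [IsScalarTower A A[X] B]
    (B₁ : Type*) [CommRing B₁] [Algebra A B₁]
    -- `θ : B ⊗_{A[t]} A[t,t⁻¹] ≃ B₁ ⊗_A A[t,t⁻¹]`, compatible with `t`
    (θ : (B ⊗[A[X]] A[T;T⁻¹]) ≃ₐ[A] (B₁ ⊗[A] A[T;T⁻¹]))
    (hθT : ∀ l : A[T;T⁻¹], θ ((1 : B) ⊗ₜ[A[X]] l) = (1 : B₁) ⊗ₜ[A] l)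
    -- a generating set of `B` sent by `θ` to pure monomial tensors
    (Sgen : Set B) (hgen : Algebra.adjoin A[X] Sgen = ⊤)
    (hmono : ∀ b ∈ Sgen, ∃ (c : B₁) (n : ℤ),
      θ (b ⊗ₜ[A[X]] 1) = c ⊗ₜ[A] (T n)) :
    -- `β := id ⊗ (t ↦ st, s ↦ s)` on `B₁ ⊗_A A[t,t⁻¹,s,s⁻¹]`
    letI β : (B₁ ⊗[A] AddMonoidAlgebra A (ℤ × ℤ)) ≃ₐ[A] (B₁ ⊗[A] AddMonoidAlgebra A (ℤ × ℤ)) :=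
      Algebra.TensorProduct.congr (AlgEquiv.refl (R := A) (A₁ := B₁))
        (AddMonoidAlgebra.domCongr A A shear)
    -- the inclusion `B₁ ⊗ A[t,t⁻¹] → B₁ ⊗ A[t,t⁻¹,s,s⁻¹]`, `t ↦ t`
    letI ι : (B₁ ⊗[A] A[T;T⁻¹]) →ₐ[A] (B₁ ⊗[A] AddMonoidAlgebra A (ℤ × ℤ)) :=
      Algebra.TensorProduct.map (AlgHom.id A B₁)
        (AddMonoidAlgebra.mapDomainAlgHom A A
          (AddMonoidHom.inl ℤ ℤ))
    -- the subalgebra `θ(B) ⊗_{A[t]} A[t,s,s⁻¹]`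
    letI C : Subalgebra A (B₁ ⊗[A] AddMonoidAlgebra A (ℤ × ℤ)) :=
      Algebra.adjoin A
        ((Set.range fun b : B => ι (θ (b ⊗ₜ[A[X]] 1))) ∪
          {z | ∃ (a b : ℤ), 0 ≤ a ∧
            z = (1 : B₁) ⊗ₜ[A]
              (AddMonoidAlgebra.single ((a, b) : ℤ × ℤ) (1 : A) : AddMonoidAlgebra A (ℤ × ℤ))})
    Subalgebra.map β.toAlgHom C = C := by
  refine Subalgebra.map_eq_self_of_map_le _
    (map_congr_domCongr_integralSubalgebra_le (fun _ => rfl) hθT hgen hmono) ?_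
  rw [← Algebra.TensorProduct.congr_symm, AddMonoidAlgebra.domCongr_symm]
  exact map_congr_domCongr_integralSubalgebra_le (fun _ => rfl) hθT hgen hmono
end

section
/- Let R be a Noetherian ring and f: N → N' a morphism of flatly filtered bundles over R (an R-linear map with f(Fil^i N) ⊆ Fil^i N' for all i). Then the map f ↦ Rees(f), restricting f ⊗ id on N ⊗_R R[t,t^{-1}], gives a bijection Hom_{filt}(N, N') ≅ Hom_{G_m-equiv, R[t]}(Rees(N), Rees(N')), with inverse g ↦ g mod (t-1). -/
/-!
STATEMENT 5: For `R` Noetherian and flatly filtered bundles `(N, Fil)`, `(N', Fil')` over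
`R`, the assignment `f ↦ Rees(f)` (the restriction of `f ⊗ id` on `N ⊗_R R[t,t⁻¹]`) gives a
bijection between filtered `R`-linear maps `N → N'` and `G_m`-equivariant (i.e. graded)
`R[t]`-linear maps `Rees(N) → Rees(N')`, with inverse `g ↦ g mod (t-1)` (realized below by
the evaluation-at-`t = 1` map `ev1`).
-/

open Polynomial LaurentPolynomial TensorProduct

instance lpSMulComm (R : Type*) [CommRing R] : SMulCommClass R R[X] R[T;T⁻¹] :=
  ⟨fun r p x => by simp [Algebra.smul_def, mul_left_comm]⟩

instance lpTower (R : Type*) [CommRing R] : IsScalarTower R R[X] R[T;T⁻¹] :=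
  IsScalarTower.of_algebraMap_eq fun r => by
    rw [← LaurentPolynomial.C_eq_algebraMap, algebraMap_eq_toLaurent,
      Polynomial.algebraMap_eq, Polynomial.toLaurent_C]

noncomputable instance reesAmbientModule (R : Type*) [CommRing R] (N : Type*)
    [AddCommGroup N] [Module R N] : Module R[X] (R[T;T⁻¹] ⊗[R] N) :=
  TensorProduct.leftModule

/-- The Rees module of a filtered module, as an `R[X]`-submodule of `R[T;T⁻¹] ⊗[R] N`. -/
noncomputable def ReesModule (R : Type*) [CommRing R] (N : Type*) [AddCommGroup N] [Module R N]
    (Fil : ℤ → Submodule R N) : Submodule R[X] (R[T;T⁻¹] ⊗[R] N) :=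
  Submodule.span R[X]
    {z : R[T;T⁻¹] ⊗[R] N | ∃ (i : ℤ) (x : N), x ∈ Fil i ∧ z = (T (-i)) ⊗ₜ[R] x}

variable (R : Type*) [CommRing R]

/-- The degree-`d` homogeneous part of `R[T;T⁻¹] ⊗[R] N`: elements of the form `T^d ⊗ x`. -/
noncomputable def ambientDeg (N : Type*) [AddCommGroup N] [Module R N] (d : ℤ) :
    Submodule R (R[T;T⁻¹] ⊗[R] N) :=
  LinearMap.range ((TensorProduct.mk R R[T;T⁻¹] N) (T d))

/-- A map of Rees modules is `G_m`-equivariant iff it preserves homogeneous parts. -/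
def IsGraded {N N' : Type*} [AddCommGroup N] [Module R N] [AddCommGroup N'] [Module R N']
    {Fil : ℤ → Submodule R N} {Fil' : ℤ → Submodule R N'}
    (g : ReesModule R N Fil →ₗ[R[X]] ReesModule R N' Fil') : Prop :=
  ∀ (d : ℤ) (z : ReesModule R N Fil),
    (z : R[T;T⁻¹] ⊗[R] N) ∈ ambientDeg R N d →
      ((g z : R[T;T⁻¹] ⊗[R] N') ∈ ambientDeg R N' d)

/-- Evaluation at `t = 1`, `N ⊗ R[t,t⁻¹] → N`, i.e. reduction modulo `(t-1)`. -/
noncomputable def ev1 (N : Type*) [AddCommGroup N] [Module R N] :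
    (R[T;T⁻¹] ⊗[R] N) →ₗ[R] N :=
  TensorProduct.lift ((LinearMap.lsmul R N).comp
    ((Finsupp.linearCombination R (fun _ : ℤ => (1 : R)) :
      (ℤ →₀ R) →ₗ[R] R).comp
      (AddMonoidAlgebra.coeffLinearEquiv R : R[T;T⁻¹] ≃ₗ[R] (ℤ →₀ R)).toLinearMap))


/-!
A graded `R[X]`-linear map `g` of Rees modules is determined by its values on the generators
`T ^ (-i) ⊗ x` (`x ∈ Fil i`), and gradedness forces `g (T ^ (-i) ⊗ x) = T ^ (-i) ⊗ y`.
Multiplication by `X` moves a generator between filtration indices while evaluation at `T = 1`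
does not see `X`, so `y` depends only on `x`. Since `N` is finitely generated and the filtration
is exhaustive, some `Fil i₀` is all of `N`, and `f : x ↦ y` is read off on `T ^ (-i₀) ⊗ N`; it is
filtered because the `T ^ (-i)`-coefficient of an element of `Rees(N')` lies in `Fil' i`.
-/

theorem Module.Finite.exists_eq_top_of_directed {R M ι : Type*} [Semiring R] [AddCommMonoid M]
    [Module R M] [Module.Finite R M] [Nonempty ι] {F : ι → Submodule R M}
    (hdir : Directed (· ≤ ·) F) (hcover : ∀ x, ∃ i, x ∈ F i) : ∃ i, F i = ⊤ := by
  have htop : IsCompactElement (⊤ : Submodule R M) :=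
    (Submodule.fg_iff_compact ⊤).mp Module.Finite.fg_top
  obtain ⟨_, ⟨i, rfl⟩, hi⟩ :=
    (CompleteLattice.isCompactElement_iff_le_of_directed_sSup_le _ _).mp htop (Set.range F)
      (Set.range_nonempty F) hdir.directedOn_range
      fun x _ => let ⟨i, hi⟩ := hcover x; Submodule.mem_sSup_of_mem (Set.mem_range_self i) hi
  exact ⟨i, top_le_iff.mp hi⟩

theorem Polynomial.smul_mem_of_X_smul_mem {R M : Type*} [CommSemiring R] [AddCommMonoid M]
    [Module R M] [Module R[X] M] [IsScalarTower R R[X] M] (S : Submodule R M)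
    (hX : ∀ z ∈ S, (X : R[X]) • z ∈ S) (p : R[X]) {z : M} (hz : z ∈ S) : p • z ∈ S := by
  induction p using Polynomial.induction_on generalizing z with
  | C a => rw [← Polynomial.algebraMap_eq, IsScalarTower.algebraMap_smul]; exact S.smul_mem a hz
  | add p q hp hq => simpa [add_smul] using add_mem (hp hz) (hq hz)
  | monomial n a ih =>
    rw [pow_succ, ← mul_assoc, mul_comm, mul_smul]
    exact hX _ (ih hz)

section Ambient

variable {R} {N N' : Type*} [AddCommGroup N] [Module R N] [AddCommGroup N'] [Module R N']

theorem polynomial_smul_tmul (p : R[X]) (a : R[T;T⁻¹]) (x : N) :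
    p • (a ⊗ₜ[R] x) = (toLaurent p * a) ⊗ₜ[R] x := by
  rw [TensorProduct.smul_tmul', Algebra.smul_def, LaurentPolynomial.algebraMap_eq_toLaurent]

theorem X_pow_smul_T_tmul (k : ℕ) (e : ℤ) (x : N) :
    (X ^ k : R[X]) • (T e ⊗ₜ[R] x) = (T (k + e) : R[T;T⁻¹]) ⊗ₜ[R] x := by
  rw [polynomial_smul_tmul, Polynomial.toLaurent_X_pow, ← T_add]

theorem ev1_tmul (a : R[T;T⁻¹]) (x : N) :
    ev1 R N (a ⊗ₜ[R] x) = eval₂ (RingHom.id R) 1 a • x := by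
  rw [ev1, TensorProduct.lift.tmul]
  refine congrArg (fun r : R => r • x) ?_
  induction a using LaurentPolynomial.induction_on' with
  | add p q hp hq => simp_all
  | C_mul_T n r =>
    have hcoeff : (LaurentPolynomial.C r * T n : R[T;T⁻¹]).coeff = Finsupp.single n r := by
      rw [← single_eq_C_mul_T]; rfl
    simp [hcoeff]

@[simp]
theorem ev1_T_tmul (n : ℤ) (x : N) : ev1 R N (T n ⊗ₜ[R] x) = x := by
  simp [ev1_tmul]

theorem ev1_smul (p : R[X]) (w : R[T;T⁻¹] ⊗[R] N) : ev1 R N (p • w) = p.eval 1 • ev1 R N w := by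
  induction w using TensorProduct.induction_on with
  | zero => simp
  | tmul a x => simp [polynomial_smul_tmul, ev1_tmul, mul_smul]
  | add u v hu hv => simp [hu, hv]

theorem ev1_baseChange (f : N →ₗ[R] N') (w : R[T;T⁻¹] ⊗[R] N) :
    ev1 R N' (f.baseChange R[T;T⁻¹] w) = f (ev1 R N w) := by
  induction w using TensorProduct.induction_on with
  | zero => simp
  | tmul a x => simp [ev1_tmul]
  | add u v hu hv => simp [hu, hv]

theorem eq_T_tmul_ev1_of_mem_ambientDeg {d : ℤ} {w : R[T;T⁻¹] ⊗[R] N}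
    (hw : w ∈ ambientDeg R N d) :
    w = T d ⊗ₜ[R] ev1 R N w := by
  obtain ⟨y, rfl⟩ := hw
  simp

noncomputable def degComponent (d : ℤ) : (R[T;T⁻¹] ⊗[R] N) →ₗ[R] N :=
  TensorProduct.lift ((LinearMap.lsmul R N).comp
    ((Finsupp.lapply d).comp (AddMonoidAlgebra.coeffLinearEquiv R).toLinearMap))

theorem degComponent_T_tmul (d e : ℤ) (x : N) :
    degComponent d (T e ⊗ₜ[R] x) = if e = d then x else 0 := by
  split_ifs <;> simp [degComponent, T_apply, *]

end Ambient

section Rees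

variable {R} {N N' : Type*} [AddCommGroup N] [Module R N] [AddCommGroup N'] [Module R N']
  {Fil : ℤ → Submodule R N} {Fil' : ℤ → Submodule R N'}

noncomputable def reesGen {i : ℤ} {x : N} (hx : x ∈ Fil i) : ReesModule R N Fil :=
  ⟨T (-i) ⊗ₜ[R] x, Submodule.subset_span ⟨i, x, hx, rfl⟩⟩

@[simp]
theorem coe_reesGen {i : ℤ} {x : N} (hx : x ∈ Fil i) :
    (reesGen hx : R[T;T⁻¹] ⊗[R] N) = T (-i) ⊗ₜ[R] x :=
  rfl

theorem ReesModule.hom_ext {M : Type*} [AddCommGroup M] [Module R[X] M]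
    {a b : ReesModule R N Fil →ₗ[R[X]] M}
    (h : ∀ (i : ℤ) (x : N) (hx : x ∈ Fil i), a (reesGen hx) = b (reesGen hx)) : a = b := by
  refine LinearMap.ext_on Submodule.span_span_coe_preimage ?_
  rintro z ⟨i, x, hx, hz⟩
  obtain rfl : z = reesGen hx := Subtype.ext hz
  exact h i x hx

/-- The `R`-span of the generators is already stable under `X`, as the filtration decreases. -/
theorem ReesModule.mem_span_generators (hdec : Antitone Fil) {z : R[T;T⁻¹] ⊗[R] N}
    (hz : z ∈ ReesModule R N Fil) :
    z ∈ Submodule.span R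
      {z : R[T;T⁻¹] ⊗[R] N | ∃ (i : ℤ) (x : N), x ∈ Fil i ∧ z = (T (-i)) ⊗ₜ[R] x} := by
  set S := Submodule.span R
      {z : R[T;T⁻¹] ⊗[R] N | ∃ (i : ℤ) (x : N), x ∈ Fil i ∧ z = (T (-i)) ⊗ₜ[R] x}
  have hX : ∀ z ∈ S, (X : R[X]) • z ∈ S := by
    intro z hz
    induction hz using Submodule.span_induction with
    | mem w hw =>
      obtain ⟨i, x, hx, rfl⟩ := hw
      refine Submodule.subset_span ⟨i - 1, x, hdec (by omega) hx, ?_⟩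
      rw [← pow_one (X : R[X]), X_pow_smul_T_tmul]
      congr 2
      push_cast
      ring
    | zero => simp
    | add u v _ _ hu hv => simpa [smul_add] using add_mem hu hv
    | smul r u _ hu => simpa [smul_comm (X : R[X]) r u] using S.smul_mem r hu
  let SX : Submodule R[X] (R[T;T⁻¹] ⊗[R] N) :=
    { S with smul_mem' := fun p _ hz => Polynomial.smul_mem_of_X_smul_mem S hX p hz }
  exact (Submodule.span_le (p := SX)).mpr Submodule.subset_span hz

theorem ReesModule.degComponent_mem (hdec : Antitone Fil) (d : ℤ) {z : R[T;T⁻¹] ⊗[R] N}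
    (hz : z ∈ ReesModule R N Fil) : degComponent d z ∈ Fil (-d) := by
  have hspan := ReesModule.mem_span_generators hdec hz
  clear hz
  induction hspan using Submodule.span_induction with
  | mem w hw =>
    obtain ⟨i, x, hx, rfl⟩ := hw
    rw [degComponent_T_tmul]
    split_ifs with h
    · rwa [← h, neg_neg]
    · exact zero_mem _
  | zero => simp
  | add u v _ _ hu hv => simpa using add_mem hu hv
  | smul r u _ hu => simpa using (Fil (-d)).smul_mem r hu

theorem ReesModule.mem_of_T_tmul_mem (hdec : Antitone Fil) {i : ℤ} {x : N}
    (h : T (-i) ⊗ₜ[R] x ∈ ReesModule R N Fil) : x ∈ Fil i := by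
  simpa [degComponent_T_tmul] using ReesModule.degComponent_mem hdec (-i) h

end Rees

section ReesMap

variable {R} {N N' : Type*} [AddCommGroup N] [Module R N] [AddCommGroup N'] [Module R N']
  {Fil : ℤ → Submodule R N} {Fil' : ℤ → Submodule R N'}

theorem baseChange_mem_ReesModule {f : N →ₗ[R] N'} (hf : ∀ i, (Fil i).map f ≤ Fil' i)
    {z : R[T;T⁻¹] ⊗[R] N} (hz : z ∈ ReesModule R N Fil) :
    f.baseChange R[T;T⁻¹] z ∈ ReesModule R N' Fil' := by
  refine (Submodule.span_le (p := (ReesModule R N' Fil').comap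
    ((f.baseChange R[T;T⁻¹]).restrictScalars R[X]))).mpr ?_ hz
  rintro _ ⟨i, x, hx, rfl⟩
  exact Submodule.subset_span ⟨i, f x, hf i ⟨x, hx, rfl⟩, rfl⟩

noncomputable def reesMap (f : N →ₗ[R] N') (hf : ∀ i, (Fil i).map f ≤ Fil' i) :
    ReesModule R N Fil →ₗ[R[X]] ReesModule R N' Fil' :=
  ((f.baseChange R[T;T⁻¹]).restrictScalars R[X]).restrict fun _ hz =>
    baseChange_mem_ReesModule hf hz

theorem coe_reesMap (f : N →ₗ[R] N') (hf : ∀ i, (Fil i).map f ≤ Fil' i)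
    (z : ReesModule R N Fil) :
    (reesMap f hf z : R[T;T⁻¹] ⊗[R] N') = f.baseChange R[T;T⁻¹] (z : R[T;T⁻¹] ⊗[R] N) :=
  rfl

theorem isGraded_reesMap (f : N →ₗ[R] N') (hf : ∀ i, (Fil i).map f ≤ Fil' i) :
    IsGraded R (reesMap f hf) := by
  rintro d z ⟨x, hx⟩
  refine ⟨f x, ?_⟩
  simp [coe_reesMap, ← hx]

/-- The two generators differ by a power of `X`, which evaluation at `T = 1` does not see. -/
theorem ev1_apply_reesGen_eq (g : ReesModule R N Fil →ₗ[R[X]] ReesModule R N' Fil')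
    {i j : ℤ} {x : N} (hi : x ∈ Fil i) (hj : x ∈ Fil j) :
    ev1 R N' (g (reesGen hi)) = ev1 R N' (g (reesGen hj)) := by
  wlog hij : i ≤ j generalizing i j
  · exact (this hj hi (le_of_not_ge hij)).symm
  have hX : reesGen hi = (X ^ (j - i).toNat : R[X]) • reesGen hj := by
    ext
    rw [Submodule.coe_smul, coe_reesGen, coe_reesGen, X_pow_smul_T_tmul]
    congr 2
    omega
  rw [hX, map_smul, Submodule.coe_smul, ev1_smul]
  simp

theorem IsGraded.coe_apply_reesGen {g : ReesModule R N Fil →ₗ[R[X]] ReesModule R N' Fil'}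
    (hg : IsGraded R g) {i : ℤ} {x : N} (hx : x ∈ Fil i) :
    (g (reesGen hx) : R[T;T⁻¹] ⊗[R] N') = T (-i) ⊗ₜ[R] ev1 R N' (g (reesGen hx)) :=
  eq_T_tmul_ev1_of_mem_ambientDeg (hg (-i) _ ⟨x, rfl⟩)

noncomputable def reesEmbedding {i₀ : ℤ} (htop : Fil i₀ = ⊤) : N →ₗ[R] ReesModule R N Fil where
  toFun x := reesGen (by simp [htop] : x ∈ Fil i₀)
  map_add' _ _ := Subtype.ext (TensorProduct.tmul_add _ _ _)
  map_smul' r x := Subtype.ext (TensorProduct.tmul_smul r _ x)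

/-- `g mod (T - 1)`, computed on the copy `T ^ (-i₀) ⊗ N` of `N = Fil i₀` in the Rees module. -/
noncomputable def reesDescent (g : ReesModule R N Fil →ₗ[R[X]] ReesModule R N' Fil') {i₀ : ℤ}
    (htop : Fil i₀ = ⊤) : N →ₗ[R] N' :=
  ev1 R N' ∘ₗ (ReesModule R N' Fil').subtype.restrictScalars R ∘ₗ g.restrictScalars R ∘ₗ
    reesEmbedding htop

theorem reesDescent_apply (g : ReesModule R N Fil →ₗ[R[X]] ReesModule R N' Fil') {i₀ : ℤ}
    (htop : Fil i₀ = ⊤) {i : ℤ} {x : N} (hx : x ∈ Fil i) :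
    reesDescent g htop x = ev1 R N' (g (reesGen hx)) :=
  ev1_apply_reesGen_eq g (by simp [htop]) hx

theorem IsGraded.coe_apply_eq_baseChange {g : ReesModule R N Fil →ₗ[R[X]] ReesModule R N' Fil'}
    (hg : IsGraded R g) {i₀ : ℤ} (htop : Fil i₀ = ⊤) (z : ReesModule R N Fil) :
    (g z : R[T;T⁻¹] ⊗[R] N') =
      (reesDescent g htop).baseChange R[T;T⁻¹] (z : R[T;T⁻¹] ⊗[R] N) := by
  have hext : (ReesModule R N' Fil').subtype ∘ₗ g =
      ((reesDescent g htop).baseChange R[T;T⁻¹]).restrictScalars R[X] ∘ₗ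
        (ReesModule R N Fil).subtype :=
    ReesModule.hom_ext fun i x hx => by
      rw [LinearMap.comp_apply, Submodule.subtype_apply, hg.coe_apply_reesGen hx,
        ← reesDescent_apply g htop hx]
      simp
  exact LinearMap.congr_fun hext z

theorem IsGraded.map_reesDescent_le {g : ReesModule R N Fil →ₗ[R[X]] ReesModule R N' Fil'}
    (hg : IsGraded R g) (hdec' : Antitone Fil') {i₀ : ℤ} (htop : Fil i₀ = ⊤) (i : ℤ) :
    (Fil i).map (reesDescent g htop) ≤ Fil' i := by
  rintro _ ⟨x, hx, rfl⟩
  refine ReesModule.mem_of_T_tmul_mem hdec' ?_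
  rw [reesDescent_apply g htop hx, ← hg.coe_apply_reesGen hx]
  exact (g (reesGen hx)).2

end ReesMap

theorem rees_hom_bijection
    (N : Type*) [AddCommGroup N] [Module R N] [Module.Finite R N]
    (N' : Type*) [AddCommGroup N'] [Module R N']
    (Fil : ℤ → Submodule R N) (Fil' : ℤ → Submodule R N')
    (hdec : Antitone Fil) (hdec' : Antitone Fil')
    (hexh : ∀ x : N, ∃ i : ℤ, x ∈ Fil i) :
    -- `f ↦ Rees(f)`: every filtered map extends uniquely to a graded map of Rees modules
    (∀ f : N →ₗ[R] N', (∀ i : ℤ, (Fil i).map f ≤ Fil' i) →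
      ∃! g : ReesModule R N Fil →ₗ[R[X]] ReesModule R N' Fil',
        IsGraded R g ∧
        ∀ z : ReesModule R N Fil,
          (g z : R[T;T⁻¹] ⊗[R] N') = f.baseChange R[T;T⁻¹] (z : R[T;T⁻¹] ⊗[R] N))
    ∧
    -- `g ↦ g mod (t-1)`: every graded map of Rees modules arises from a unique filtered
    -- map, namely its reduction modulo `(t-1)` computed by `ev1`
    (∀ g : ReesModule R N Fil →ₗ[R[X]] ReesModule R N' Fil', IsGraded R g →
      ∃! f : N →ₗ[R] N',
        (∀ i : ℤ, (Fil i).map f ≤ Fil' i) ∧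
        (∀ z : ReesModule R N Fil,
          (g z : R[T;T⁻¹] ⊗[R] N') = f.baseChange R[T;T⁻¹] (z : R[T;T⁻¹] ⊗[R] N)) ∧
        (∀ z : ReesModule R N Fil,
          f (ev1 R N (z : R[T;T⁻¹] ⊗[R] N)) = ev1 R N' (g z : R[T;T⁻¹] ⊗[R] N'))) := by
  refine ⟨fun f hf => ⟨reesMap f hf, ⟨isGraded_reesMap f hf, coe_reesMap f hf⟩, ?_⟩,
    fun g hg => ?_⟩
  · rintro g ⟨-, hg⟩
    exact LinearMap.ext fun z => Subtype.ext (hg z)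
  obtain ⟨i₀, htop⟩ := Module.Finite.exists_eq_top_of_directed hdec.directed_le hexh
  have hbc := hg.coe_apply_eq_baseChange htop
  refine ⟨reesDescent g htop, ⟨hg.map_reesDescent_le hdec' htop, hbc, fun z => ?_⟩, ?_⟩
  · rw [hbc, ev1_baseChange]
  · rintro f ⟨-, -, hf⟩
    ext x
    have hx : x ∈ Fil i₀ := by simp [htop]
    simpa [reesDescent_apply g htop hx] using hf (reesGen hx)
end

section
/- Let R = W[[u_1,…,u_d]] over a p-adically complete ring W, M a finite free R-module with integrable connection ∇ = Σ ε_i ∇_i satisfying Griffiths transversality ∇_i(Fil^p) ⊆ Fil^{p-1} for an exhaustive decreasing filtration Fil^•. Then for each n, the Taylor-series isomorphism θ_n(f) = Σ_I ∇_I(f) ⊗ ε^{[I]} over the divided-power thickening B_n preserves the product filtrations: θ_n(Fil^p(M ⊗ B_n)) ⊆ Fil^p(M ⊗ B_n), where Fil on B_n is the divided-power filtration generated by the ε_i. -/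
/-!
STATEMENT 10: Let `R = W[[u_1,…,u_d]]`, `M` a finite free `R`-module with integrable
connection `∇ = Σ ε_i ∇_i` satisfying Griffiths transversality `∇_i(Fil^p) ⊆ Fil^{p-1}`.
Then the Taylor-series isomorphism `θ_n(f) = Σ_I ∇_I(f) ⊗ ε^{[I]}` over the divided-power
thickening `B_n` preserves the product (convolution) filtrations.

We model `M ⊗ B_n` through the divided-power basis `ε^{[I]}` (`I` a multiset in `{1,…,d}`
of cardinality `≤ n`), i.e. as functions `I ↦ M`; the convolution filtration is
`Fil^p = { g | g(J) ∈ Fil^{p-|J|} }`, and `θ_n` has `K`-component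
`Σ_{J ≤ K} (∏_k C(mult_K k, mult_J k)) ∇_{K∖J}(g(J))` (the divided-power multiplication
coefficients). The statement: if `g(J) ∈ Fil^{p-|J|}` for all `J`, then
`θ_n(g)(K) ∈ Fil^{p-|K|}` for all `K` with `|K| ≤ n`.
-/

/-- The product `∇_I = ∏_{k ∈ I} ∇_k` for a multiset `I` of commuting operators. -/
noncomputable def nablaI {R M : Type*} [CommRing R] [AddCommGroup M] [Module R M]
    {d : ℕ} (nabla : Fin d → Module.End R M)
    (hcomm : ∀ i j : Fin d, Commute (nabla i) (nabla j))
    (I : Multiset (Fin d)) : Module.End R M :=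
  (I.map nabla).noncommProd (by
    intro x hx y hy _
    obtain ⟨i, _, rfl⟩ := Multiset.mem_map.mp hx
    obtain ⟨j, _, rfl⟩ := Multiset.mem_map.mp hy
    exact hcomm i j)

/-- The divided-power multiplication coefficient: `ε^{[I]} ε^{[J]} = c·ε^{[I+J]}` with
`c = ∏_k C(mult_{I+J} k, mult_J k)`. -/
def dpCoeff {d : ℕ} (J K : Multiset (Fin d)) : ℕ :=
  ∏ k ∈ K.toFinset, (K.count k).choose (J.count k)

lemma nablaI_mem_fil {R M : Type*} [CommRing R] [AddCommGroup M] [Module R M]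
    {d : ℕ} (nabla : Fin d → Module.End R M)
    (hcomm : ∀ i j : Fin d, Commute (nabla i) (nabla j))
    (Fil : ℤ → Submodule R M)
    (hGT : ∀ (i : Fin d) (p : ℤ), (Fil p).map (nabla i) ≤ Fil (p - 1))
    (I : Multiset (Fin d)) :
    ∀ (q : ℤ) (x : M), x ∈ Fil q → nablaI nabla hcomm I x ∈ Fil (q - Multiset.card I) := by
  induction I using Multiset.induction with
  | empty =>
    intro q x hx
    simpa [nablaI] using hx
  | cons i I ih =>
    intro q x hx
    have h1 : nablaI nabla hcomm (i ::ₘ I) x = nabla i (nablaI nabla hcomm I x) := by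
      simp [nablaI, Multiset.noncommProd_cons, Module.End.mul_apply]
    rw [h1]
    have h2 := ih q x hx
    have h3 := hGT i (q - Multiset.card I) ⟨_, h2, rfl⟩
    convert h3 using 2
    simp [Multiset.card_cons]
    push_cast
    ring

theorem taylor_series_preserves_filtration
    (R : Type*) [CommRing R] (M : Type*) [AddCommGroup M] [Module R M]
    [Module.Free R M] [Module.Finite R M]
    (d n : ℕ)
    (nabla : Fin d → Module.End R M)
    (hcomm : ∀ i j : Fin d, Commute (nabla i) (nabla j))
    (Fil : ℤ → Submodule R M)
    (hdec : Antitone Fil)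
    (hexh : ∀ x : M, ∃ i : ℤ, x ∈ Fil i)
    -- Griffiths transversality: `∇_i(Fil^p) ⊆ Fil^{p-1}`
    (hGT : ∀ (i : Fin d) (p : ℤ), (Fil p).map (nabla i) ≤ Fil (p - 1))
    -- an element of `Fil^p (M ⊗ B_n)`, written out in the divided-power basis
    (g : Multiset (Fin d) → M) (p : ℤ)
    (hg : ∀ J : Multiset (Fin d), g J ∈ Fil (p - (Multiset.card J : ℤ)))
    (hgsupp : ∀ J : Multiset (Fin d), n < Multiset.card J → g J = 0) :
    -- the `K`-component of `θ_n(g)` lies in `Fil^{p-|K|}`, i.e. `θ_n(g) ∈ Fil^p(M ⊗ B_n)`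
    ∀ K : Multiset (Fin d), Multiset.card K ≤ n →
      (∑ J ∈ K.powerset.toFinset,
          dpCoeff J K • (nablaI nabla hcomm (K - J)) (g J))
        ∈ Fil (p - (Multiset.card K : ℤ)) := by
  intro K hK
  apply Submodule.sum_mem
  intro J hJ
  apply nsmul_mem
  have h := nablaI_mem_fil nabla hcomm Fil hGT (K - J) _ _ (hg J)
  have hle : J ≤ K := Multiset.mem_powerset.mp (Multiset.mem_toFinset.mp hJ)
  have hcard : Multiset.card (K - J) = Multiset.card K - Multiset.card J :=
    Multiset.card_sub hle
  have hJK : Multiset.card J ≤ Multiset.card K := Multiset.card_le_card hle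
  convert h using 2
  rw [hcard]
  omega
end
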